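/- Let a, x, b ∈ ℝ with b ≠ 0 and (a−x)·b < 0. Then ∫₀^∞ t · (|a−x|/t^{3/2}) φ((a + bt − x)/√t) dt = |a−x|/|b|. (The expectation of the first-passage time of Brownian motion starting at x through the line a + bt equals |a−x|/|b|.) -/

import Mathlib

open Real MeasureTheory Set Filter

/-- Standard Gaussian density φ(z) = (1/√(2π)) e^{−z²/2}. -/
noncomputable def gaussPdf (z : ℝ) : ℝ := (1 / Real.sqrt (2 * π)) * Real.exp (-z ^ 2 / 2)

/-- Standard Gaussian distribution function Φ(y) = ∫_{−∞}^y φ(z) dz. -/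
noncomputable def gaussCdf (y : ℝ) : ℝ := ∫ z in Set.Iio y, gaussPdf z

/-- ψ_t(u) = (e^{−b²u/2}/(π√(u(t−u)))) · [ e^{−b²(t−u)/2}
      + (b/2)·√(2π(t−u)) · (2Φ(b√(t−u)) − 1) ]. -/
noncomputable def psi (b t u : ℝ) : ℝ :=
  (Real.exp (-b ^ 2 * u / 2) / (π * Real.sqrt (u * (t - u)))) *
    (Real.exp (-b ^ 2 * (t - u) / 2) +
      (b / 2) * Real.sqrt (2 * π * (t - u)) *
        (2 * gaussCdf (b * Real.sqrt (t - u)) - 1))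

/-- Inverse Gaussian first-passage density f_{τ₁}(t) = (|a−x|/t^{3/2}) φ((a+bt−x)/√t). -/
noncomputable def invGaussPdf (a x b t : ℝ) : ℝ :=
  (|a - x| / t ^ ((3 : ℝ) / 2)) * gaussPdf ((a + b * t - x) / Real.sqrt t)

/-
Since `(a - x) b = -|a - x| |b|`, substituting `t = u²` turns the integral into
`2 |a - x| ∫₀^∞ φ(|b| u - |a - x| / u) du`.
For `β, c > 0` the map `h u = β u - c / u` is a diffeomorphism of `(0, ∞)` onto `ℝ` with
`h' u = β + c / u²`, so `1 = ∫ φ = β I + ∫₀^∞ (c / u²) φ(h u) du` with `I = ∫₀^∞ φ(h u) du`.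
The involution `u ↦ c / (β u)` maps `h` to `-h` and shows that the last integral is again `β I`;
hence `I = 1 / (2β)` (the Cauchy–Schlömilch transformation).
-/

lemma gaussPdf_eq_gaussianPDFReal : gaussPdf = ProbabilityTheory.gaussianPDFReal 0 1 := by
  ext z
  simp [gaussPdf, ProbabilityTheory.gaussianPDFReal]

lemma gaussPdf_nonneg (z : ℝ) : 0 ≤ gaussPdf z := by
  unfold gaussPdf; positivity

lemma gaussPdf_congr_sq {y z : ℝ} (h : y ^ 2 = z ^ 2) : gaussPdf y = gaussPdf z := by
  simp only [gaussPdf, h]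

lemma integrable_gaussPdf : Integrable gaussPdf :=
  gaussPdf_eq_gaussianPDFReal ▸ ProbabilityTheory.integrable_gaussianPDFReal 0 1

lemma integral_gaussPdf : ∫ z, gaussPdf z = 1 :=
  gaussPdf_eq_gaussianPDFReal ▸ ProbabilityTheory.integral_gaussianPDFReal_eq_one 0 one_ne_zero

lemma integral_Ioi_comp_sq {E : Type*} [NormedAddCommGroup E] [NormedSpace ℝ E] (g : ℝ → E) :
    ∫ u in Ioi 0, (2 * u) • g (u ^ 2) = ∫ t in Ioi 0, g t := by
  rw [← integral_comp_rpow_Ioi_of_pos (g := g) two_pos]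
  refine setIntegral_congr_fun measurableSet_Ioi fun u _ => ?_
  norm_num

section CauchySchlomilch

variable {E : Type*} [NormedAddCommGroup E] [NormedSpace ℝ E] {b c : ℝ}

lemma hasDerivAt_mul_sub_div (b c : ℝ) {u : ℝ} (hu : u ≠ 0) :
    HasDerivAt (fun u => b * u - c / u) (b + c / u ^ 2) u := by
  have hinv : HasDerivAt (fun u => c / u) (c * -(u ^ 2)⁻¹) u := by
    simpa only [div_eq_mul_inv] using (hasDerivAt_inv hu).const_mul c
  exact (((hasDerivAt_id' u).const_mul b).sub hinv).congr_deriv (by ring)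

lemma strictMonoOn_mul_sub_div (hb : 0 < b) (hc : 0 ≤ c) :
    StrictMonoOn (fun u => b * u - c / u) (Ioi 0) := by
  intro u hu v hv huv
  have : c / v ≤ c / u := div_le_div_of_nonneg_left hc hu huv.le
  dsimp only
  nlinarith

lemma image_mul_sub_div_Ioi (hb : 0 < b) (hc : 0 < c) :
    (fun u => b * u - c / u) '' Ioi 0 = univ := by
  refine eq_univ_of_forall fun y => ?_
  -- the positive root of `b u² - y u - c = 0`
  set s := √(y ^ 2 + 4 * b * c)
  have hs : s ^ 2 = y ^ 2 + 4 * b * c := sq_sqrt (by positivity)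
  have hys : 0 < y + s := by nlinarith [sqrt_nonneg (y ^ 2 + 4 * b * c)]
  refine ⟨(y + s) / (2 * b), div_pos hys (by positivity), ?_⟩
  field_simp
  nlinarith

theorem integrableOn_smul_comp_mul_sub_div_iff (hb : 0 < b) (hc : 0 < c) {f : ℝ → E} :
    IntegrableOn (fun u => (b + c / u ^ 2) • f (b * u - c / u)) (Ioi 0) ↔ Integrable f := by
  have hderiv := fun u (hu : u ∈ Ioi (0 : ℝ)) =>
    (hasDerivAt_mul_sub_div b c (ne_of_gt hu)).hasDerivWithinAt (s := Ioi 0)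
  rw [← integrableOn_univ, ← image_mul_sub_div_Ioi hb hc,
    integrableOn_image_iff_integrableOn_abs_deriv_smul measurableSet_Ioi hderiv
      (strictMonoOn_mul_sub_div hb hc.le).injOn]
  refine integrableOn_congr_fun (fun u hu => ?_) measurableSet_Ioi
  have : 0 < c / u ^ 2 := div_pos hc (pow_pos hu 2)
  simp only [abs_of_pos (add_pos hb this)]

theorem integral_smul_comp_mul_sub_div (hb : 0 < b) (hc : 0 < c) (f : ℝ → E) :
    ∫ u in Ioi 0, (b + c / u ^ 2) • f (b * u - c / u) = ∫ y, f y := by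
  have hderiv := fun u (hu : u ∈ Ioi (0 : ℝ)) =>
    (hasDerivAt_mul_sub_div b c (ne_of_gt hu)).hasDerivWithinAt (s := Ioi 0)
  have := integral_image_eq_integral_abs_deriv_smul measurableSet_Ioi hderiv
    (strictMonoOn_mul_sub_div hb hc.le).injOn f
  rw [image_mul_sub_div_Ioi hb hc, setIntegral_univ] at this
  rw [this]
  refine setIntegral_congr_fun measurableSet_Ioi fun u hu => ?_
  have : 0 < c / u ^ 2 := div_pos hc (pow_pos hu 2)
  simp only [abs_of_pos (add_pos hb this)]

theorem integral_div_sq_smul_comp_mul_sub_div (hb : 0 < b) (hc : 0 < c) (f : ℝ → E) :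
    ∫ u in Ioi 0, (c / u ^ 2) • f (b * u - c / u) = b • ∫ u in Ioi 0, f (c / u - b * u) := by
  set k : ℝ → ℝ := fun v => c / b * v⁻¹
  have hderiv : ∀ v ∈ Ioi (0 : ℝ), HasDerivWithinAt k (c / b * -(v ^ 2)⁻¹) (Ioi 0) v :=
    fun v hv => ((hasDerivAt_inv (ne_of_gt hv)).const_mul (c / b)).hasDerivWithinAt
  have hmaps : MapsTo k (Ioi 0) (Ioi 0) := fun v (hv : 0 < v) => by
    show 0 < c / b * v⁻¹
    positivity
  have hinv : InvOn k k (Ioi 0) (Ioi 0) := by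
    constructor <;> intro v (hv : 0 < v) <;> simp only [k] <;> field_simp
  have hbij : BijOn k (Ioi 0) (Ioi 0) := hinv.bijOn hmaps hmaps
  have := integral_image_eq_integral_abs_deriv_smul measurableSet_Ioi hderiv hbij.injOn
    (fun u => (c / u ^ 2) • f (b * u - c / u))
  rw [hbij.image_eq] at this
  rw [this, ← integral_smul]
  refine setIntegral_congr_fun measurableSet_Ioi fun v (hv : 0 < v) => ?_
  have hk : k v = c / (b * v) := by simp only [k]; field_simp
  have habs : |c / b * -(v ^ 2)⁻¹| = c / (b * v ^ 2) := by
    rw [abs_mul, abs_neg, abs_of_pos (by positivity), abs_of_pos (by positivity)]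
    field_simp
  rw [smul_smul, habs, hk]
  congr 2 <;> field_simp

end CauchySchlomilch

theorem integral_gaussPdf_mul_sub_div {b c : ℝ} (hb : 0 < b) (hc : 0 < c) :
    ∫ u in Ioi 0, gaussPdf (b * u - c / u) = 1 / (2 * b) := by
  set I := ∫ u in Ioi 0, gaussPdf (b * u - c / u)
  have hsum : IntegrableOn (fun u => (b + c / u ^ 2) * gaussPdf (b * u - c / u)) (Ioi 0) :=
    (integrableOn_smul_comp_mul_sub_div_iff hb hc).2 integrable_gaussPdf
  have hmeas : Measurable fun u => gaussPdf (b * u - c / u) := by unfold gaussPdf; fun_prop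
  have hleft : IntegrableOn (fun u => b * gaussPdf (b * u - c / u)) (Ioi 0) := by
    refine hsum.mono' (hmeas.const_mul b).aestronglyMeasurable ?_
    filter_upwards [ae_restrict_mem measurableSet_Ioi] with u (hu : 0 < u)
    have := gaussPdf_nonneg (b * u - c / u)
    rw [norm_of_nonneg (by positivity)]
    gcongr
    exact le_add_of_nonneg_right (by positivity)
  have hright : IntegrableOn (fun u => c / u ^ 2 * gaussPdf (b * u - c / u)) (Ioi 0) :=
    (hsum.sub hleft).congr_fun (fun u _ => by simp only [Pi.sub_apply]; ring) measurableSet_Ioi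
  have hJ : ∫ u in Ioi 0, c / u ^ 2 * gaussPdf (b * u - c / u) = b * I := by
    have := integral_div_sq_smul_comp_mul_sub_div hb hc gaussPdf
    simp only [smul_eq_mul] at this
    rw [this]
    congr 1
    exact integral_congr_ae (ae_of_all _ fun u => gaussPdf_congr_sq (by ring))
  have hone : 1 = b * I + b * I := by
    have := integral_smul_comp_mul_sub_div hb hc gaussPdf
    simp only [smul_eq_mul, add_mul] at this
    rw [← integral_gaussPdf, ← this, integral_add hleft hright, integral_const_mul, hJ]
  field_simp
  linarith

lemma invGaussPdf_sq {a x b u : ℝ} (hu : 0 < u) (h : (a - x) * b < 0) :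
    invGaussPdf a x b (u ^ 2) = |a - x| / u ^ 3 * gaussPdf (|b| * u - |a - x| / u) := by
  have hpow : (u ^ 2) ^ ((3 : ℝ) / 2) = u ^ 3 := by
    rw [← rpow_natCast, ← rpow_mul hu.le]
    norm_num
  have hprod : |a - x| * |b| = -((a - x) * b) := by rw [← abs_mul, abs_of_neg h]
  rw [invGaussPdf, hpow, sqrt_sq hu.le]
  refine congrArg _ (gaussPdf_congr_sq ?_)
  field_simp
  linear_combination (2 * u ^ 2) * hprod - sq_abs (a - x) - u ^ 4 * sq_abs b

theorem stmt8 (a x b : ℝ) (hb : b ≠ 0) (h : (a - x) * b < 0) :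
    ∫ t in Set.Ioi (0 : ℝ),
        t * ((|a - x| / t ^ ((3 : ℝ) / 2)) * gaussPdf ((a + b * t - x) / Real.sqrt t))
      = |a - x| / |b| := by
  have hc : 0 < |a - x| := abs_pos.2 (left_ne_zero_of_mul h.ne)
  have hβ : 0 < |b| := abs_pos.2 hb
  calc ∫ t in Ioi 0, t * invGaussPdf a x b t
      = ∫ u in Ioi 0, 2 * |a - x| * gaussPdf (|b| * u - |a - x| / u) := by
        rw [← integral_Ioi_comp_sq]
        refine setIntegral_congr_fun measurableSet_Ioi fun u (hu : 0 < u) => ?_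
        rw [invGaussPdf_sq hu h, smul_eq_mul]
        field_simp
    _ = |a - x| / |b| := by
        rw [integral_const_mul, integral_gaussPdf_mul_sub_div hβ hc]
        field_simp
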